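/- The dihedral angle of a Euclidean tetrahedron at the x-edge is preserved by the Regge symmetry: if Δ has edges x, y, a, b, c, d (in the Regge configuration) and Δ̄ has edges x, y, s−a, s−b, s−c, s−d with s = (a+b+c+d)/2, and both tetrahedra exist, then the dihedral angles of Δ and Δ̄ along their respective x-edges are equal. -/
import Mathlib


open RealInnerProductSpace

/-- The dihedral angle of the tetrahedron `P 0 P 1 P 2 P 3` along the edge `P 0 P 1`:
the angle between the half-planes bounded by the line `P 0 P 1` containing `P 2`
and `P 3`, computed as the angle between the components of `P 2 - P 0` and
`P 3 - P 0` orthogonal to the edge direction. -/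
noncomputable def dihedralAngleAtEdge01 (P : Fin 4 → EuclideanSpace ℝ (Fin 3)) : ℝ :=
  let e := P 1 - P 0
  let u := (P 2 - P 0) - (⟪P 2 - P 0, e⟫ / ⟪e, e⟫) • e
  let v := (P 3 - P 0) - (⟪P 3 - P 0, e⟫ / ⟪e, e⟫) • e
  InnerProductGeometry.angle u v

private lemma angle_sub_proj {V : Type*} [NormedAddCommGroup V] [InnerProductSpace ℝ V]
    (e p q : V) (he : e ≠ 0) :
    InnerProductGeometry.angle (p - (⟪p,e⟫/⟪e,e⟫)•e) (q - (⟪q,e⟫/⟪e,e⟫)•e)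
    = Real.arccos ((⟪p,q⟫*⟪e,e⟫ - ⟪p,e⟫*⟪q,e⟫) /
        Real.sqrt ((⟪p,p⟫*⟪e,e⟫ - ⟪p,e⟫^2)*(⟪q,q⟫*⟪e,e⟫ - ⟪q,e⟫^2))) := by
  have hE : (0:ℝ) < ⟪e,e⟫ := by
    rw [real_inner_self_eq_norm_sq]
    exact pow_pos (norm_pos_iff.mpr he) 2
  set E := (⟪e,e⟫ : ℝ) with hEdef
  set u := p - (⟪p,e⟫/E)•e with hu
  set v := q - (⟪q,e⟫/E)•e with hv
  have huv : ⟪u,v⟫ = (⟪p,q⟫*E - ⟪p,e⟫*⟪q,e⟫)/E := by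
    simp only [hu, hv, inner_sub_left, inner_sub_right, real_inner_smul_left,
      real_inner_smul_right, real_inner_comm q e]
    field_simp
    try ring
  have huu : ⟪u,u⟫ = (⟪p,p⟫*E - ⟪p,e⟫^2)/E := by
    simp only [hu, inner_sub_left, inner_sub_right, real_inner_smul_left,
      real_inner_smul_right, real_inner_comm p e]
    field_simp
    try ring
  have hvv : ⟪v,v⟫ = (⟪q,q⟫*E - ⟪q,e⟫^2)/E := by
    simp only [hv, inner_sub_left, inner_sub_right, real_inner_smul_left,
      real_inner_smul_right, real_inner_comm q e]
    field_simp
    try ring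
  have hnu : ‖u‖ = Real.sqrt ((⟪p,p⟫*E - ⟪p,e⟫^2)/E) := by
    rw [← huu, real_inner_self_eq_norm_sq, Real.sqrt_sq (norm_nonneg _)]
  have hnv : ‖v‖ = Real.sqrt ((⟪q,q⟫*E - ⟪q,e⟫^2)/E) := by
    rw [← hvv, real_inner_self_eq_norm_sq, Real.sqrt_sq (norm_nonneg _)]
  have hSu : (0:ℝ) ≤ ⟪p,p⟫*E - ⟪p,e⟫^2 := by
    have := real_inner_mul_inner_self_le p e
    nlinarith
  have hSv : (0:ℝ) ≤ ⟪q,q⟫*E - ⟪q,e⟫^2 := by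
    have := real_inner_mul_inner_self_le q e
    nlinarith
  have hprod : Real.sqrt ((⟪p,p⟫*E - ⟪p,e⟫^2)/E) * Real.sqrt ((⟪q,q⟫*E - ⟪q,e⟫^2)/E)
      = Real.sqrt ((⟪p,p⟫*E - ⟪p,e⟫^2)*(⟪q,q⟫*E - ⟪q,e⟫^2)) / E := by
    rw [← Real.sqrt_mul (div_nonneg hSu hE.le)]
    have h1 : (⟪p,p⟫*E - ⟪p,e⟫^2)/E * ((⟪q,q⟫*E - ⟪q,e⟫^2)/E)
        = (⟪p,p⟫*E - ⟪p,e⟫^2)*(⟪q,q⟫*E - ⟪q,e⟫^2) / E^2 := by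
      rw [div_mul_div_comm]
      ring_nf
    rw [h1, Real.sqrt_div (mul_nonneg hSu hSv), Real.sqrt_sq hE.le]
  have key : ∀ n t : ℝ, (n/E)/(t/E) = n/t := by
    intro n t
    rcases eq_or_ne t 0 with h|h
    · simp [h]
    · field_simp
  rw [InnerProductGeometry.angle, huv, hnu, hnv, hprod, key]

private lemma dihedral_formula (R : Fin 4 → EuclideanSpace ℝ (Fin 3))
    (hR : AffineIndependent ℝ R) (X Y A B C D : ℝ)
    (h01 : dist (R 0) (R 1) = X) (h23 : dist (R 2) (R 3) = Y)
    (h02 : dist (R 0) (R 2) = A) (h12 : dist (R 1) (R 2) = B)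
    (h13 : dist (R 1) (R 3) = C) (h03 : dist (R 0) (R 3) = D) :
    dihedralAngleAtEdge01 R = Real.arccos (
      ((A^2+D^2-Y^2)/2 * X^2 - (A^2+X^2-B^2)/2 * ((D^2+X^2-C^2)/2)) /
      Real.sqrt ((A^2 * X^2 - ((A^2+X^2-B^2)/2)^2) * (D^2 * X^2 - ((D^2+X^2-C^2)/2)^2))) := by
  have he : R 1 - R 0 ≠ 0 :=
    sub_ne_zero.mpr (hR.injective.ne (by decide : (1:Fin 4) ≠ 0))
  have norm10 : ‖R 1 - R 0‖ = X := by rw [← dist_eq_norm, dist_comm]; exact h01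
  have norm20 : ‖R 2 - R 0‖ = A := by rw [← dist_eq_norm, dist_comm]; exact h02
  have norm30 : ‖R 3 - R 0‖ = D := by rw [← dist_eq_norm, dist_comm]; exact h03
  have hE : ⟪R 1 - R 0, R 1 - R 0⟫ = X^2 := by
    rw [real_inner_self_eq_norm_sq, norm10]
  have hpp : ⟪R 2 - R 0, R 2 - R 0⟫ = A^2 := by
    rw [real_inner_self_eq_norm_sq, norm20]
  have hqq : ⟪R 3 - R 0, R 3 - R 0⟫ = D^2 := by
    rw [real_inner_self_eq_norm_sq, norm30]
  have hpe : ⟪R 2 - R 0, R 1 - R 0⟫ = (A^2+X^2-B^2)/2 := by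
    rw [real_inner_eq_norm_mul_self_add_norm_mul_self_sub_norm_sub_mul_self_div_two,
      sub_sub_sub_cancel_right, norm10, norm20, ← dist_eq_norm, dist_comm, h12]
    ring
  have hqe : ⟪R 3 - R 0, R 1 - R 0⟫ = (D^2+X^2-C^2)/2 := by
    rw [real_inner_eq_norm_mul_self_add_norm_mul_self_sub_norm_sub_mul_self_div_two,
      sub_sub_sub_cancel_right, norm10, norm30, ← dist_eq_norm, dist_comm, h13]
    ring
  have hpq : ⟪R 2 - R 0, R 3 - R 0⟫ = (A^2+D^2-Y^2)/2 := by
    rw [real_inner_eq_norm_mul_self_add_norm_mul_self_sub_norm_sub_mul_self_div_two,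
      sub_sub_sub_cancel_right, norm20, norm30, ← dist_eq_norm, h23]
    ring
  rw [dihedralAngleAtEdge01]
  rw [angle_sub_proj (R 1 - R 0) (R 2 - R 0) (R 3 - R 0) he]
  rw [hpq, hpe, hqe, hpp, hqq, hE]

/-- The Regge symmetry preserves the dihedral angle at the `x`-edge. -/
theorem regge_dihedral_angle_at_x_edge
    (x y a b c d : ℝ)
    (P Q : Fin 4 → EuclideanSpace ℝ (Fin 3))
    (hP : AffineIndependent ℝ P) (hQ : AffineIndependent ℝ Q)
    (hP12 : dist (P 0) (P 1) = x) (hP34 : dist (P 2) (P 3) = y)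
    (hP13 : dist (P 0) (P 2) = a) (hP23 : dist (P 1) (P 2) = b)
    (hP24 : dist (P 1) (P 3) = c) (hP14 : dist (P 0) (P 3) = d)
    (hQ12 : dist (Q 0) (Q 1) = x) (hQ34 : dist (Q 2) (Q 3) = y)
    (hQ13 : dist (Q 0) (Q 2) = (a+b+c+d)/2 - a)
    (hQ23 : dist (Q 1) (Q 2) = (a+b+c+d)/2 - b)
    (hQ24 : dist (Q 1) (Q 3) = (a+b+c+d)/2 - c)
    (hQ14 : dist (Q 0) (Q 3) = (a+b+c+d)/2 - d) :
    dihedralAngleAtEdge01 P = dihedralAngleAtEdge01 Q := by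
  rw [dihedral_formula P hP x y a b c d hP12 hP34 hP13 hP23 hP24 hP14,
    dihedral_formula Q hQ x y ((a+b+c+d)/2 - a) ((a+b+c+d)/2 - b) ((a+b+c+d)/2 - c)
      ((a+b+c+d)/2 - d) hQ12 hQ34 hQ13 hQ23 hQ24 hQ14]
  congr 1
  congr 1
  · ring
  · congr 1
    ring
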